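/- Under the same assumptions as the Penalty Newton contraction (relative smoothness L, relative convexity μ, ∇f(x) ∈ Range(H(x)), G ≻ 0, ρ > 0, K(x) = ((1/ρ)G + H(x))^{-1}), the Augmented Newton iterate x_{k+1} = x_k − K(x_k)[(1/L)∇f(x_k) − (1/ρ)G(x_k − x_{k−1})], assuming additionally G(x_k − x_{k−1}) ∈ Range(H(x_k)), satisfies the Lyapunov decrease: V_{k+1} ≤ (1 − ξμ/L) V_k, where V_k = f(x_k) − f* + (L/(2ρ))·(x_k − x_{k−1})^T G (x_k − x_{k−1}) and ξ is a uniform lower bound on λ_min^+(H(x)^{1/2}K(x)H(x)^{1/2}). -/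

import Mathlib

open Matrix

/-- `t` is an eigenvalue of the matrix `A`. -/
def HasEigen {n : ℕ} (A : Matrix (Fin n) (Fin n) ℝ) (t : ℝ) : Prop :=
  ∃ v : Fin n → ℝ, v ≠ 0 ∧ A.mulVec v = t • v

/-- The smallest nonzero eigenvalue of a matrix. -/
noncomputable def lambdaMinPos {n : ℕ} (A : Matrix (Fin n) (Fin n) ℝ) : ℝ :=
  sInf {t : ℝ | t ≠ 0 ∧ HasEigen A t}

open scoped ComplexOrder in
/-- The positive semidefinite square root of a positive semidefinite matrix
(the definition `Matrix.PosSemidef.sqrt` of the older Mathlib, since removed). -/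
noncomputable def Matrix.PosSemidef.sqrt {m 𝕜 : Type*} [Fintype m] [DecidableEq m] [RCLike 𝕜]
    {A : Matrix m m 𝕜} (hA : A.PosSemidef) : Matrix m m 𝕜 :=
  hA.1.eigenvectorUnitary.1 * diagonal ((↑) ∘ (√·) ∘ hA.1.eigenvalues) *
    (star hA.1.eigenvectorUnitary : Matrix m m 𝕜)

/-!
Write `H = ∇²f(x_k)`, `K = (ρ⁻¹G + H)⁻¹`, `w = G(x_k - x_{k-1})`, and `∇f(x_k) = Hs`, `w = Hs₂`.
The step `δ` solves `(ρ⁻¹G + H)δ = L⁻¹∇f(x_k) - ρ⁻¹w`, so `δᵀHδ + ρ⁻¹δᵀGδ` is a quadratic form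
in `K`, and relative smoothness followed by completing the square gives
`V_{k+1} ≤ f(x_k) - f* - (2L)⁻¹ ∇fᵀK∇f + (L/2ρ) ρ⁻¹ wᵀKw`.

With `S = H^{1/2}`, the matrices `M = SKS` and `B = SG⁻¹S` satisfy `ρ⁻¹M + MB = B`, so an
eigenvector of `B` with eigenvalue `b` is an eigenvector of `M` with eigenvalue `b / (ρ⁻¹ + b)`,
and `Ss` is orthogonal to `ker B`. Expanding in an eigenbasis of `B` gives `ξ sᵀHs ≤ ∇fᵀK∇f` and
`ρ⁻¹ wᵀKw ≤ (1 - ξ) wᵀG⁻¹w`. Relative convexity gives `2μ(f(x_k) - f*) ≤ sᵀHs`, and the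
contraction follows for `max ξ 0`, which is still a lower bound of `λ⁺_min(M)`.
-/

section Sqrt

open scoped MatrixOrder ComplexOrder

variable {m 𝕜 : Type*} [Fintype m] [DecidableEq m] [RCLike 𝕜] {A : Matrix m m 𝕜}

lemma Matrix.PosSemidef.sqrt_eq_cfcSqrt (hA : A.PosSemidef) : hA.sqrt = CFC.sqrt A := by
  rw [CFC.sqrt_eq_real_sqrt A hA.nonneg, cfcₙ_eq_cfc, hA.1.cfc_eq]
  rfl

lemma Matrix.PosSemidef.sqrt_mul_self (hA : A.PosSemidef) : hA.sqrt * hA.sqrt = A := by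
  rw [hA.sqrt_eq_cfcSqrt, CFC.sqrt_mul_sqrt_self A hA.nonneg]

lemma Matrix.PosSemidef.isHermitian_sqrt (hA : A.PosSemidef) : hA.sqrt.IsHermitian := by
  rw [hA.sqrt_eq_cfcSqrt]
  exact (CFC.sqrt_nonneg A).posSemidef.isHermitian

end Sqrt

section Symmetric

variable {ι R : Type*} [Fintype ι] [CommSemiring R] {A : Matrix ι ι R}

lemma Matrix.IsSymm.mulVec_dotProduct (hA : A.IsSymm) (x y : ι → R) :
    A *ᵥ x ⬝ᵥ y = x ⬝ᵥ A *ᵥ y := by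
  rw [dotProduct_mulVec, ← mulVec_transpose, hA.eq]

lemma Matrix.IsSymm.mulVec_dotProduct_mul_mul_mulVec (hA : A.IsSymm) (B : Matrix ι ι R)
    (x : ι → R) : A *ᵥ x ⬝ᵥ (A * B * A) *ᵥ (A *ᵥ x) = (A * A) *ᵥ x ⬝ᵥ B *ᵥ ((A * A) *ᵥ x) := by
  simp only [← mulVec_mulVec, hA.mulVec_dotProduct]

end Symmetric

lemma Matrix.PosSemidef.mul_mul_of_isSymm {ι : Type*} [Fintype ι] {A S : Matrix ι ι ℝ}
    (hA : A.PosSemidef) (hS : S.IsSymm) : (S * A * S).PosSemidef := by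
  simpa [conjTranspose_eq_transpose_of_trivial, hS.eq] using hA.mul_mul_conjTranspose_same S

section LambdaMinPos

variable {n : ℕ} {A : Matrix (Fin n) (Fin n) ℝ} {t : ℝ}

lemma HasEigen.nonneg (hA : A.PosSemidef) (ht : HasEigen A t) : 0 ≤ t := by
  obtain ⟨v, hv, hAv⟩ := ht
  have hvv : 0 < v ⬝ᵥ v := by simpa using dotProduct_star_self_pos_iff.mpr hv
  have hquad : 0 ≤ v ⬝ᵥ A *ᵥ v := by simpa using hA.dotProduct_mulVec_nonneg v
  rw [hAv, dotProduct_smul, smul_eq_mul] at hquad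
  exact nonneg_of_mul_nonneg_left hquad hvv

lemma lambdaMinPos_nonneg (hA : A.PosSemidef) : 0 ≤ lambdaMinPos A :=
  Real.sInf_nonneg fun _ ht => ht.2.nonneg hA

lemma lambdaMinPos_le (hA : A.PosSemidef) (ht : t ≠ 0) (hAt : HasEigen A t) :
    lambdaMinPos A ≤ t :=
  csInf_le ⟨0, fun _ hs => hs.2.nonneg hA⟩ ⟨ht, hAt⟩

end LambdaMinPos

lemma Matrix.IsSymm.dotProduct_mulVec_eq_sum {ι κ : Type*} [Fintype ι] [Fintype κ]
    {A : Matrix ι ι ℝ} (hA : A.IsSymm) (u : OrthonormalBasis κ ℝ (EuclideanSpace ℝ ι))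
    {a : κ → ℝ} (hu : ∀ i, A *ᵥ u i = a i • u i) (z : ι → ℝ) :
    z ⬝ᵥ A *ᵥ z = ∑ i, a i * (u i ⬝ᵥ z) ^ 2 := by
  have hz : z ⬝ᵥ A *ᵥ z = inner ℝ (WithLp.toLp 2 z) (WithLp.toLp 2 (A *ᵥ z)) := by
    simp [EuclideanSpace.inner_eq_star_dotProduct, dotProduct_comm]
  rw [hz, ← u.sum_inner_mul_inner]
  refine Finset.sum_congr rfl fun i _ => ?_
  simp only [EuclideanSpace.inner_eq_star_dotProduct, star_trivial]
  rw [hA.mulVec_dotProduct, hu, dotProduct_smul, smul_eq_mul, dotProduct_comm z]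
  ring

lemma sandwich_resolvent_identity {ι 𝕜 : Type*} [Fintype ι] [DecidableEq ι] [Field 𝕜]
    {S G H : Matrix ι ι 𝕜} {c : 𝕜} (hSH : S * S = H) (hG : IsUnit G.det)
    (hP : IsUnit (c • G + H).det) :
    c • (S * (c • G + H)⁻¹ * S) + S * (c • G + H)⁻¹ * S * (S * G⁻¹ * S) = S * G⁻¹ * S := by
  have hKP : (c • G + H)⁻¹ * (c • G + H) = 1 := nonsing_inv_mul _ hP
  calc c • (S * (c • G + H)⁻¹ * S) + S * (c • G + H)⁻¹ * S * (S * G⁻¹ * S)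
      = S * ((c • G + H)⁻¹ * (c • G + H)) * G⁻¹ * S := by
        simp only [Matrix.mul_add, Matrix.add_mul, Matrix.mul_smul, Matrix.smul_mul,
          Matrix.mul_assoc, mul_nonsing_inv_cancel_left _ _ hG, ← hSH]
    _ = S * G⁻¹ * S := by rw [hKP, Matrix.mul_one]

lemma mulVec_eq_div_smul_of_smul_add_mul_eq {ι 𝕜 : Type*} [Fintype ι] [Field 𝕜]
    {M B : Matrix ι ι 𝕜} {c b : 𝕜} {v : ι → 𝕜} (hMB : c • M + M * B = B)
    (hv : B *ᵥ v = b • v) (hcb : c + b ≠ 0) : M *ᵥ v = (b / (c + b)) • v := by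
  have h := congrArg (· *ᵥ v) hMB
  simp only [add_mulVec, smul_mulVec, ← mulVec_mulVec, hv, mulVec_smul, ← add_smul] at h
  rw [div_eq_inv_mul, ← smul_smul, ← h, smul_smul, inv_mul_cancel₀ hcb, one_smul]

lemma Matrix.PosDef.mulVec_eq_zero_of_mul_mul_mulVec_eq_zero {ι : Type*} [Fintype ι]
    {Q S : Matrix ι ι ℝ} (hQ : Q.PosDef) (hS : S.IsSymm) {v : ι → ℝ}
    (h : (S * Q * S) *ᵥ v = 0) : S *ᵥ v = 0 := by
  by_contra hne
  have hpos := hQ.dotProduct_mulVec_pos hne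
  rw [star_trivial, hS.mulVec_dotProduct, mulVec_mulVec, mulVec_mulVec, h,
    dotProduct_zero] at hpos
  exact hpos.false

section Spectral

variable {n : ℕ} {M B : Matrix (Fin n) (Fin n) ℝ} {c ξ : ℝ} {z : Fin n → ℝ}

lemma exists_common_eigen_expansion (hB : B.PosSemidef) (hM : M.PosSemidef) (hc : 0 < c)
    (hMB : c • M + M * B = B) (hξ : ξ ≤ lambdaMinPos M) (hz : ∀ v, B *ᵥ v = 0 → v ⬝ᵥ z = 0) :
    ∃ b y : Fin n → ℝ, (∀ i, 0 ≤ b i) ∧ (∀ i, y i ≠ 0 → ξ ≤ b i / (c + b i)) ∧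
      z ⬝ᵥ z = ∑ i, y i ^ 2 ∧ z ⬝ᵥ M *ᵥ z = ∑ i, b i / (c + b i) * y i ^ 2 ∧
      z ⬝ᵥ B *ᵥ z = ∑ i, b i * y i ^ 2 := by
  set u := hB.1.eigenvectorBasis
  set b := hB.1.eigenvalues
  have hb : ∀ i, 0 ≤ b i := hB.eigenvalues_nonneg
  have hBu : ∀ i, B *ᵥ u i = b i • u i := hB.1.mulVec_eigenvectorBasis
  have hMu : ∀ i, M *ᵥ u i = (b i / (c + b i)) • u i := fun i =>
    mulVec_eq_div_smul_of_smul_add_mul_eq hMB (hBu i) (by linarith [hb i])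
  refine ⟨b, fun i => u i ⬝ᵥ z, hb, fun i hy => ?_, ?_,
    (isHermitian_iff_isSymm.mp hM.1).dotProduct_mulVec_eq_sum u hMu z,
    (isHermitian_iff_isSymm.mp hB.1).dotProduct_mulVec_eq_sum u hBu z⟩
  · rcases (hb i).eq_or_lt with hbi | hbi
    · exact absurd (hz _ (by rw [hBu, ← hbi, zero_smul])) hy
    · refine hξ.trans (lambdaMinPos_le hM (div_pos hbi (by linarith)).ne' ⟨u i, ?_, hMu i⟩)
      simpa using u.orthonormal.ne_zero i
  · simpa using isSymm_one.dotProduct_mulVec_eq_sum u (a := 1) (by simp) z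

lemma dotProduct_bounds_of_smul_add_mul_eq (hB : B.PosSemidef) (hM : M.PosSemidef) (hc : 0 < c)
    (hMB : c • M + M * B = B) (hξ : ξ ≤ lambdaMinPos M) (hz : ∀ v, B *ᵥ v = 0 → v ⬝ᵥ z = 0) :
    ξ * (z ⬝ᵥ z) ≤ z ⬝ᵥ M *ᵥ z ∧ c * (z ⬝ᵥ M *ᵥ z) ≤ (1 - ξ) * (z ⬝ᵥ B *ᵥ z) := by
  obtain ⟨b, y, hb, hby, hzz, hzM, hzB⟩ := exists_common_eigen_expansion hB hM hc hMB hξ hz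
  rw [hzz, hzM, hzB, Finset.mul_sum, Finset.mul_sum, Finset.mul_sum]
  constructor <;> refine Finset.sum_le_sum fun i _ => ?_ <;> rcases eq_or_ne (y i) 0 with hy | hy
  · simp [hy]
  · exact mul_le_mul_of_nonneg_right (hby i hy) (sq_nonneg _)
  · simp [hy]
  · have hcb : c * (b i / (c + b i)) = (1 - b i / (c + b i)) * b i := by
      field_simp [(add_pos_of_pos_of_nonneg hc (hb i)).ne']
      ring
    calc c * (b i / (c + b i) * y i ^ 2) = (1 - b i / (c + b i)) * (b i * y i ^ 2) := by
          rw [← mul_assoc, hcb, mul_assoc]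
      _ ≤ (1 - ξ) * (b i * y i ^ 2) := by
          have := hby i hy
          gcongr
          exact mul_nonneg (hb i) (sq_nonneg _)

end Spectral

lemma hessian_form_bounds {n : ℕ} {S G H : Matrix (Fin n) (Fin n) ℝ} {c ξ : ℝ} (hS : S.IsSymm)
    (hSH : S * S = H) (hG : G.PosDef) (hc : 0 < c)
    (hξ : ξ ≤ lambdaMinPos (S * (c • G + H)⁻¹ * S)) (s : Fin n → ℝ) :
    ξ * (s ⬝ᵥ H *ᵥ s) ≤ H *ᵥ s ⬝ᵥ (c • G + H)⁻¹ *ᵥ (H *ᵥ s) ∧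
      c * (H *ᵥ s ⬝ᵥ (c • G + H)⁻¹ *ᵥ (H *ᵥ s)) ≤ (1 - ξ) * (H *ᵥ s ⬝ᵥ G⁻¹ *ᵥ (H *ᵥ s)) := by
  have hH : H.PosSemidef := by simpa [hSH] using PosSemidef.one.mul_mul_of_isSymm hS
  have hP : (c • G + H).PosDef := (hG.smul hc).add_posSemidef hH
  have hker (v : Fin n → ℝ) (hv : (S * G⁻¹ * S) *ᵥ v = 0) : v ⬝ᵥ S *ᵥ s = 0 := by
    rw [← hS.mulVec_dotProduct, hG.inv.mulVec_eq_zero_of_mul_mul_mulVec_eq_zero hS hv,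
      zero_dotProduct]
  have hbounds := dotProduct_bounds_of_smul_add_mul_eq (hG.inv.posSemidef.mul_mul_of_isSymm hS)
    (hP.inv.posSemidef.mul_mul_of_isSymm hS) hc
    (sandwich_resolvent_identity hSH hG.det_pos.ne'.isUnit hP.det_pos.ne'.isUnit) hξ hker
  rwa [hS.mulVec_dotProduct_mul_mul_mulVec, hS.mulVec_dotProduct_mul_mul_mulVec,
    hS.mulVec_dotProduct, mulVec_mulVec, hSH] at hbounds

section Descent

variable {ι : Type*} [Fintype ι]

lemma two_mul_sub_le_of_relConvex {H : Matrix ι ι ℝ} (hH : H.PosSemidef) {μ : ℝ} (hμ : 0 ≤ μ)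
    {f : (ι → ℝ) → ℝ} {x y s g : ι → ℝ} (hg : H *ᵥ s = g)
    (hconv : f x ≥ f y + g ⬝ᵥ (x - y) + μ / 2 * ((x - y) ⬝ᵥ H *ᵥ (x - y))) :
    2 * μ * (f y - f x) ≤ s ⬝ᵥ H *ᵥ s := by
  subst hg
  set v := x - y
  have hsq : 0 ≤ (μ • v + s) ⬝ᵥ H *ᵥ (μ • v + s) := by
    simpa using hH.dotProduct_mulVec_nonneg (μ • v + s)
  have hsymm : s ⬝ᵥ H *ᵥ v = H *ᵥ s ⬝ᵥ v :=
    ((isHermitian_iff_isSymm.mp hH.1).mulVec_dotProduct s v).symm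
  simp only [mulVec_add, mulVec_smul, dotProduct_add, add_dotProduct, dotProduct_smul,
    smul_dotProduct, smul_eq_mul, hsymm, dotProduct_comm v (H *ᵥ s)] at hsq
  linear_combination hsq + 2 * μ * hconv

lemma dotProduct_mulVec_inv_mulVec [DecidableEq ι] {A : Matrix ι ι ℝ} (hA : IsUnit A.det)
    (u : ι → ℝ) : A⁻¹ *ᵥ u ⬝ᵥ A *ᵥ (A⁻¹ *ᵥ u) = u ⬝ᵥ A⁻¹ *ᵥ u := by
  rw [mulVec_mulVec, mul_nonsing_inv _ hA, one_mulVec, dotProduct_comm]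

lemma augmented_step_descent [DecidableEq ι] {f : (ι → ℝ) → ℝ} {G H : Matrix ι ι ℝ}
    {L ρ : ℝ} {y g w : ι → ℝ} (hL : L ≠ 0) (hP : (ρ⁻¹ • G + H).IsSymm)
    (hPdet : IsUnit (ρ⁻¹ • G + H).det)
    (hsmooth : ∀ x, f x ≤ f y + g ⬝ᵥ (x - y) + L / 2 * ((x - y) ⬝ᵥ H *ᵥ (x - y))) :
    f (y - (ρ⁻¹ • G + H)⁻¹ *ᵥ (L⁻¹ • g - ρ⁻¹ • w)) + L / (2 * ρ) *
        ((ρ⁻¹ • G + H)⁻¹ *ᵥ (L⁻¹ • g - ρ⁻¹ • w) ⬝ᵥ G *ᵥ ((ρ⁻¹ • G + H)⁻¹ *ᵥ (L⁻¹ • g - ρ⁻¹ • w))) ≤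
      f y - (2 * L)⁻¹ * (g ⬝ᵥ (ρ⁻¹ • G + H)⁻¹ *ᵥ g) +
        L / (2 * ρ) * (ρ⁻¹ * (w ⬝ᵥ (ρ⁻¹ • G + H)⁻¹ *ᵥ w)) := by
  set K := (ρ⁻¹ • G + H)⁻¹
  set u := L⁻¹ • g - ρ⁻¹ • w
  set δ := K *ᵥ u
  have hmodel : δ ⬝ᵥ H *ᵥ δ + ρ⁻¹ * (δ ⬝ᵥ G *ᵥ δ) = u ⬝ᵥ K *ᵥ u := by
    rw [← dotProduct_mulVec_inv_mulVec hPdet]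
    simp only [δ, K, add_mulVec, smul_mulVec, dotProduct_add, dotProduct_smul, smul_eq_mul]
    ring
  have hsquare : L / 2 * (u ⬝ᵥ K *ᵥ u) - g ⬝ᵥ K *ᵥ u =
      L / (2 * ρ) * (ρ⁻¹ * (w ⬝ᵥ K *ᵥ w)) - (2 * L)⁻¹ * (g ⬝ᵥ K *ᵥ g) := by
    have hcross : w ⬝ᵥ K *ᵥ g = g ⬝ᵥ K *ᵥ w := by
      rw [← hP.inv.mulVec_dotProduct, dotProduct_comm]
    simp only [u, mulVec_sub, mulVec_smul, dotProduct_sub, sub_dotProduct, dotProduct_smul,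
      smul_dotProduct, smul_eq_mul, hcross]
    field_simp
    ring
  have hstep := hsmooth (y - δ)
  simp only [sub_sub_cancel_left, mulVec_neg, dotProduct_neg, neg_dotProduct, neg_neg] at hstep
  have hscale : L / (2 * ρ) = L / 2 * ρ⁻¹ := by ring
  rw [hscale]
  linear_combination hstep + L / 2 * hmodel + hsquare

end Descent

lemma lyapunov_step_of_estimates {Vnext F sH gK wK dG ξ μ L ρ : ℝ} (hL : 0 < L) (hμL : μ ≤ L)
    (hρ : 0 ≤ ρ) (hξ : 0 ≤ ξ) (hdG : 0 ≤ dG)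
    (hdesc : Vnext ≤ F - (2 * L)⁻¹ * gK + L / (2 * ρ) * (ρ⁻¹ * wK))
    (hF : 2 * μ * F ≤ sH) (hsH : ξ * sH ≤ gK) (hwK : ρ⁻¹ * wK ≤ (1 - ξ) * dG) :
    Vnext ≤ (1 - ξ * μ / L) * (F + L / (2 * ρ) * dG) := by
  have hgap : ξ * μ / L * F ≤ (2 * L)⁻¹ * gK :=
    calc ξ * μ / L * F = (2 * L)⁻¹ * (ξ * (2 * μ * F)) := by field_simp
      _ ≤ (2 * L)⁻¹ * (ξ * sH) := by gcongr
      _ ≤ (2 * L)⁻¹ * gK := by gcongr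
  have hrate : 1 - ξ ≤ 1 - ξ * μ / L := by
    rw [sub_le_sub_iff_left, div_le_iff₀ hL]
    exact mul_le_mul_of_nonneg_left hμL hξ
  have hmom : L / (2 * ρ) * (ρ⁻¹ * wK) ≤ L / (2 * ρ) * ((1 - ξ * μ / L) * dG) :=
    mul_le_mul_of_nonneg_left (hwK.trans (mul_le_mul_of_nonneg_right hrate hdG)) (by positivity)
  linear_combination hdesc + hgap + hmom

/-- One-step Lyapunov contraction of the Augmented Newton method. -/
theorem augmented_newton_contraction {n : ℕ}
    (f : (Fin n → ℝ) → ℝ) (g : (Fin n → ℝ) → (Fin n → ℝ))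
    (Hess : (Fin n → ℝ) → Matrix (Fin n) (Fin n) ℝ)
    (G : Matrix (Fin n) (Fin n) ℝ) (hG : G.PosDef)
    (μ L ρ ξ : ℝ) (hμ : 0 < μ) (hμL : μ ≤ L) (hρ : 0 < ρ)
    (hHess : ∀ y, (Hess y).PosSemidef)
    (hrange : ∀ y, g y ∈ LinearMap.range (Hess y).mulVecLin)
    (hsmooth : ∀ x y, f x ≤ f y + g y ⬝ᵥ (x - y) + L / 2 * ((x - y) ⬝ᵥ (Hess y).mulVec (x - y)))
    (hconv : ∀ x y, f x ≥ f y + g y ⬝ᵥ (x - y) + μ / 2 * ((x - y) ⬝ᵥ (Hess y).mulVec (x - y)))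
    (xstar : Fin n → ℝ) (fstar : ℝ) (hstar : f xstar = fstar) (hmin : ∀ x, fstar ≤ f x)
    (hξ : ∀ x, ξ ≤ lambdaMinPos ((hHess x).sqrt * (ρ⁻¹ • G + Hess x)⁻¹ * (hHess x).sqrt))
    (xk xkm : Fin n → ℝ)
    (hmom : G.mulVec (xk - xkm) ∈ LinearMap.range (Hess xk).mulVecLin) :
    f (xk - ((ρ⁻¹ • G + Hess xk)⁻¹).mulVec (L⁻¹ • g xk - ρ⁻¹ • G.mulVec (xk - xkm))) - fstar +
      L / (2 * ρ) *
        ((xk - ((ρ⁻¹ • G + Hess xk)⁻¹).mulVec (L⁻¹ • g xk - ρ⁻¹ • G.mulVec (xk - xkm)) - xk) ⬝ᵥ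
          G.mulVec (xk - ((ρ⁻¹ • G + Hess xk)⁻¹).mulVec (L⁻¹ • g xk - ρ⁻¹ • G.mulVec (xk - xkm)) - xk)) ≤
    (1 - ξ * μ / L) *
      (f xk - fstar + L / (2 * ρ) * ((xk - xkm) ⬝ᵥ G.mulVec (xk - xkm))) := by
  have hL : 0 < L := hμ.trans_le hμL
  obtain ⟨s, hs⟩ := hrange xk
  obtain ⟨s₂, hs₂⟩ := hmom
  rw [mulVecLin_apply] at hs hs₂
  set w := G *ᵥ (xk - xkm)
  have hS : (hHess xk).sqrt.IsSymm := isHermitian_iff_isSymm.mp (hHess xk).isHermitian_sqrt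
  have hP : (ρ⁻¹ • G + Hess xk).PosDef := (hG.smul (inv_pos.2 hρ)).add_posSemidef (hHess xk)
  have hbounds := hessian_form_bounds hS (hHess xk).sqrt_mul_self hG (inv_pos.2 hρ)
    (max_le (hξ xk) (lambdaMinPos_nonneg (hP.inv.posSemidef.mul_mul_of_isSymm hS)))
  have hgap := two_mul_sub_le_of_relConvex (hHess xk) hμ.le hs (hconv xstar xk)
  have hgrad := (hbounds s).1
  rw [hs, hstar] at hgap
  rw [hs] at hgrad
  have hd : G⁻¹ *ᵥ w = xk - xkm := by
    rw [mulVec_mulVec, nonsing_inv_mul _ hG.det_pos.ne'.isUnit, one_mulVec]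
  have hmomentum := (hbounds s₂).2
  rw [hs₂, hd, dotProduct_comm w (xk - xkm)] at hmomentum
  have hdesc := augmented_step_descent (w := w) hL.ne'
    (isHermitian_iff_isSymm.mp hP.1) hP.det_pos.ne'.isUnit (hsmooth · xk)
  have hw : 0 ≤ (xk - xkm) ⬝ᵥ w := by
    simpa only [star_trivial] using hG.posSemidef.dotProduct_mulVec_nonneg (xk - xkm)
  simp only [sub_sub_cancel_left, mulVec_neg, dotProduct_neg, neg_dotProduct, neg_neg]
  refine (lyapunov_step_of_estimates hL hμL hρ.le (le_max_right ξ 0) hw (by linarith)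
    hgap hgrad hmomentum).trans ?_
  gcongr
  · exact add_nonneg (sub_nonneg.2 (hmin xk)) (mul_nonneg (by positivity) hw)
  · exact le_max_left ξ 0
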